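/- Let K ∈ {0, ±1}, a(η) = sin(√K η)/√K, and consider functions λ, μ of η alone satisfying the homogeneous (k = 0, Laplacian replaced by 0) Lifshitz–Khalatnikov equations λ'' = −2(a'/a)λ' and μ'' = −3(a'/a)μ' + (2/3)·3K·(λ + μ) with sound speed c² = 1/3. Then the density contrast δ(η) = (1/(3ε a²))·(3(a'/a)μ' − 3K(λ + μ)), with ε = 3K/a² + 3(a'/a²)², satisfies: the function Ψ(η) = (1/cos(√K η))·d/dη[(K/tan²(√K η))·d/dη(tan²(√K η)/K · cos(√K η) · δ(η))] obeys Ψ''(η) = 0. -/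

import Mathlib

/-- Unified scale factor `a(η) = sin(√K η)/√K` for `K ∈ {0, ±1}`. -/
noncomputable def aK (K : ℝ) : ℝ → ℝ :=
  fun η => if K = 1 then Real.sin η else if K = -1 then Real.sinh η else η

/-- Unified `τ(K,η) = tan(√K η)²/K` (`η²` for `K = 0`, `tanh² η` for `K = -1`). -/
noncomputable def tauK (K : ℝ) : ℝ → ℝ :=
  fun η => if K = 1 then Real.tan η ^ 2 else if K = -1 then Real.tanh η ^ 2 else η ^ 2

/-- Unified `cos(√K η)` (`1` for `K = 0`, `cosh η` for `K = -1`). -/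
noncomputable def cosK (K : ℝ) : ℝ → ℝ :=
  fun η => if K = 1 then Real.cos η else if K = -1 then Real.cosh η else 1

/-- Background energy density `ε = 3K/a² + 3(a'/a²)²`. -/
noncomputable def epsK (K : ℝ) : ℝ → ℝ :=
  fun η => 3 * K / aK K η ^ 2 + 3 * (deriv (aK K) η / aK K η ^ 2) ^ 2

/-- The Sachs–Wolfe second-order differential transformation
`T f = (1/cos(√K η))·∂η[(K/tan²(√K η))·∂η(tan²(√K η)/K·cos(√K η)·f)]`. -/
noncomputable def swT (K : ℝ) (f : ℝ → ℝ) : ℝ → ℝ :=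
  fun η => (1 / cosK K η) *
    deriv (fun η' => (1 / tauK K η') *
      deriv (fun η'' => tauK K η'' * cosK K η'' * f η'') η') η

noncomputable def gAux (K : ℝ) (s c lam mu : ℝ → ℝ) : ℝ → ℝ :=
  fun x => 1/3 * (s x ^ 3 * deriv mu x - K * s x ^ 4 * (lam x + mu x) / c x)

noncomputable def hAux (K : ℝ) (s c lam mu : ℝ → ℝ) : ℝ → ℝ :=
  fun x => -(K/3) * (s x * (1 + c x ^ 2) * (lam x + mu x)
    + s x ^ 2 * c x * (deriv lam x + deriv mu x))

noncomputable def phiAux (K : ℝ) (s c lam mu : ℝ → ℝ) : ℝ → ℝ :=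
  fun x => -(K/3) * ((1 + c x ^ 2) * (lam x + mu x)
    + 2 * s x * c x * deriv lam x + s x * c x * deriv mu x)

noncomputable def pAux (K : ℝ) (s lam : ℝ → ℝ) : ℝ → ℝ :=
  fun x => K ^ 2 / 3 * s x ^ 2 * deriv lam x

theorem key (K : ℝ) (s c t D lam mu : ℝ → ℝ) (S : Set ℝ) (hS : IsOpen S)
    (hs : ∀ η, HasDerivAt s (c η) η)
    (hc : ∀ η, HasDerivAt c (-(K * s η)) η)
    (pyth : ∀ η, c η ^ 2 + K * s η ^ 2 = 1)
    (hlamC : ContDiffOn ℝ (⊤ : ℕ∞) lam S) (hmuC : ContDiffOn ℝ (⊤ : ℕ∞) mu S)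
    (hreg : ∀ η ∈ S, s η ≠ 0 ∧ c η ≠ 0 ∧ t η ≠ 0)
    (ht : ∀ η ∈ S, t η * c η ^ 2 = s η ^ 2)
    (hlam : ∀ η ∈ S, deriv (deriv lam) η = -2 * (c η / s η) * deriv lam η)
    (hmu : ∀ η ∈ S, deriv (deriv mu) η
      = -3 * (c η / s η) * deriv mu η + (2/3) * (3*K) * (lam η + mu η))
    (hD : ∀ η ∈ S, D η
      = 1/3 * (s η * c η * deriv mu η - K * s η ^ 2 * (lam η + mu η))) :
    ∀ η ∈ S, deriv (deriv (fun η0 => (1 / c η0) *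
      deriv (fun η1 => (1 / t η1) *
        deriv (fun η2 => t η2 * c η2 * D η2) η1) η0)) η = 0 := by
  -- differentiability of lam, mu and their derivatives on S
  have hlam1 : ∀ η ∈ S, HasDerivAt lam (deriv lam η) η := by
    intro η hη
    exact (((hlamC.differentiableOn (by simp)).differentiableAt
      (hS.mem_nhds hη))).hasDerivAt
  have hmu1 : ∀ η ∈ S, HasDerivAt mu (deriv mu η) η := by
    intro η hη
    exact (((hmuC.differentiableOn (by simp)).differentiableAt
      (hS.mem_nhds hη))).hasDerivAt
  have hlamD : ContDiffOn ℝ (⊤ : ℕ∞) (deriv lam) S := hlamC.deriv_of_isOpen hS (mod_cast le_top)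
  have hmuD : ContDiffOn ℝ (⊤ : ℕ∞) (deriv mu) S := hmuC.deriv_of_isOpen hS (mod_cast le_top)
  have hlam2 : ∀ η ∈ S, HasDerivAt (deriv lam)
      (-2 * (c η / s η) * deriv lam η) η := by
    intro η hη
    have := (((hlamD.differentiableOn (by simp)).differentiableAt
      (hS.mem_nhds hη))).hasDerivAt
    rwa [hlam η hη] at this
  have hmu2 : ∀ η ∈ S, HasDerivAt (deriv mu)
      (-3 * (c η / s η) * deriv mu η + (2/3) * (3*K) * (lam η + mu η)) η := by
    intro η hη
    have := (((hmuD.differentiableOn (by simp)).differentiableAt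
      (hS.mem_nhds hη))).hasDerivAt
    rwa [hmu η hη] at this
  -- Step 1: inner function agrees with gAux on S
  have hG : Set.EqOn (fun η2 => t η2 * c η2 * D η2) (gAux K s c lam mu) S := by
    intro η hη
    obtain ⟨sne, cne, tne⟩ := hreg η hη
    have htη := ht η hη
    simp only [gAux, hD η hη]
    field_simp
    linear_combination (c η * deriv mu η - s η * K * (lam η + mu η)) * htη
  -- Step 2: derivative of gAux on S
  have hgd : ∀ η ∈ S, HasDerivAt (gAux K s c lam mu)
      ((1:ℝ)/3 * (((3:ℕ) * s η ^ 2 * c η * deriv mu η + s η ^ 3 *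
          (-3 * (c η / s η) * deriv mu η + (2/3) * (3*K) * (lam η + mu η)))
        - ((K * ((4:ℕ) * s η ^ 3 * c η) * (lam η + mu η)
            + K * s η ^ 4 * (deriv lam η + deriv mu η)) * c η
          - K * s η ^ 4 * (lam η + mu η) * (-(K * s η))) / c η ^ 2)) η := by
    intro η hη
    obtain ⟨sne, cne, tne⟩ := hreg η hη
    exact ((((hs η).pow 3).mul (hmu2 η hη)).sub
      (((((hs η).pow 4).const_mul K).mul ((hlam1 η hη).add (hmu1 η hη))).div
        (hc η) cne)).const_mul (1/3)
  -- Step 3: middle function agrees with hAux on S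
  have hF : Set.EqOn (fun η1 => (1 / t η1) *
      deriv (fun η2 => t η2 * c η2 * D η2) η1) (hAux K s c lam mu) S := by
    intro η hη
    obtain ⟨sne, cne, tne⟩ := hreg η hη
    have hd : deriv (fun η2 => t η2 * c η2 * D η2) η
        = deriv (gAux K s c lam mu) η :=
      Filter.EventuallyEq.deriv_eq
        (Filter.eventuallyEq_of_mem (hS.mem_nhds hη) hG)
    have htη := ht η hη
    have hpy := pyth η
    have hts : t η = s η ^ 2 / c η ^ 2 := by
      field_simp
      linarith [htη]
    simp only [hd, (hgd η hη).deriv, hAux, hts]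
    field_simp
    linear_combination (-(s η * K * (lam η + mu η))) * hpy
  -- Step 4: derivative of hAux on S
  have hhd : ∀ η ∈ S, HasDerivAt (hAux K s c lam mu)
      (-(K/3) * ((c η * (1 + c η ^ 2) + s η * ((2:ℕ) * c η ^ 1 * (-(K * s η))))
          * (lam η + mu η)
        + s η * (1 + c η ^ 2) * (deriv lam η + deriv mu η)
        + (((2:ℕ) * s η ^ 1 * c η * c η + s η ^ 2 * (-(K * s η)))
            * (deriv lam η + deriv mu η)
          + s η ^ 2 * c η * ((-2 * (c η / s η) * deriv lam η)
            + (-3 * (c η / s η) * deriv mu η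
              + (2/3) * (3*K) * (lam η + mu η)))))) η := by
    intro η hη
    exact ((((hs η).mul (((hc η).pow 2).const_add 1)).mul
        ((hlam1 η hη).add (hmu1 η hη))).add
      ((((hs η).pow 2).mul (hc η)).mul
        ((hlam2 η hη).add (hmu2 η hη)))).const_mul (-(K/3))
  -- Step 5: the transformed function agrees with phiAux on S
  have hPsi : Set.EqOn (fun η0 => (1 / c η0) *
      deriv (fun η1 => (1 / t η1) *
        deriv (fun η2 => t η2 * c η2 * D η2) η1) η0) (phiAux K s c lam mu) S := by
    intro η hη
    obtain ⟨sne, cne, tne⟩ := hreg η hη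
    have hd : deriv (fun η1 => (1 / t η1) *
        deriv (fun η2 => t η2 * c η2 * D η2) η1) η
        = deriv (hAux K s c lam mu) η :=
      Filter.EventuallyEq.deriv_eq
        (Filter.eventuallyEq_of_mem (hS.mem_nhds hη) hF)
    have hpy := pyth η
    simp only [hd, (hhd η hη).deriv, phiAux]
    field_simp
    linear_combination (K * s η * (deriv lam η + deriv mu η)) * hpy
  -- Step 6: derivative of phiAux, equals pAux on S
  have hphid : ∀ η ∈ S, HasDerivAt (phiAux K s c lam mu)
      (-(K/3) * ((((2:ℕ) * c η ^ 1 * (-(K * s η))) * (lam η + mu η)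
          + (1 + c η ^ 2) * (deriv lam η + deriv mu η))
        + ((2 * c η * c η + 2 * s η * (-(K * s η))) * deriv lam η
          + 2 * s η * c η * (-2 * (c η / s η) * deriv lam η))
        + ((c η * c η + s η * (-(K * s η))) * deriv mu η
          + s η * c η * (-3 * (c η / s η) * deriv mu η
            + (2/3) * (3*K) * (lam η + mu η))))) η := by
    intro η hη
    exact ((((((hc η).pow 2).const_add 1).mul
        ((hlam1 η hη).add (hmu1 η hη))).add
      ((((hs η).const_mul 2).mul (hc η)).mul (hlam2 η hη))).add
        (((hs η).mul (hc η)).mul (hmu2 η hη))).const_mul (-(K/3))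
  have hP : Set.EqOn (deriv (fun η0 => (1 / c η0) *
      deriv (fun η1 => (1 / t η1) *
        deriv (fun η2 => t η2 * c η2 * D η2) η1) η0)) (pAux K s lam) S := by
    intro η hη
    obtain ⟨sne, cne, tne⟩ := hreg η hη
    have hd : deriv (fun η0 => (1 / c η0) *
        deriv (fun η1 => (1 / t η1) *
          deriv (fun η2 => t η2 * c η2 * D η2) η1) η0) η
        = deriv (phiAux K s c lam mu) η :=
      Filter.EventuallyEq.deriv_eq
        (Filter.eventuallyEq_of_mem (hS.mem_nhds hη) hPsi)
    have hpy := pyth η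
    simp only [hd, (hphid η hη).deriv, pAux]
    field_simp
    linear_combination (K * (deriv lam η + deriv mu η)) * hpy
  -- Step 7: conclude
  intro η hη
  obtain ⟨sne, cne, tne⟩ := hreg η hη
  have hd : deriv (deriv (fun η0 => (1 / c η0) *
      deriv (fun η1 => (1 / t η1) *
        deriv (fun η2 => t η2 * c η2 * D η2) η1) η0)) η
      = deriv (pAux K s lam) η :=
    Filter.EventuallyEq.deriv_eq
      (Filter.eventuallyEq_of_mem (hS.mem_nhds hη) hP)
  have hpd : HasDerivAt (pAux K s lam)
      ((K ^ 2 / 3 * ((2:ℕ) * s η ^ 1 * c η)) * deriv lam η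
        + (K ^ 2 / 3 * s η ^ 2) * (-2 * (c η / s η) * deriv lam η)) η :=
    (((hs η).pow 2).const_mul (K ^ 2 / 3)).mul (hlam2 η hη)
  rw [hd, hpd.deriv]
  field_simp
  ring

lemma hD_gen (K : ℝ) (lam mu : ℝ → ℝ)
    (hs : ∀ η, HasDerivAt (aK K) (cosK K η) η)
    (pyth : ∀ η, cosK K η ^ 2 + K * aK K η ^ 2 = 1)
    (η : ℝ) (sne : aK K η ≠ 0) :
    (1 / (3 * epsK K η * aK K η ^ 2)) *
      (3 * (deriv (aK K) η / aK K η) * deriv mu η - 3 * K * (lam η + mu η))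
    = 1/3 * (aK K η * cosK K η * deriv mu η - K * aK K η ^ 2 * (lam η + mu η)) := by
  have hd : deriv (aK K) η = cosK K η := (hs η).deriv
  have hpy := pyth η
  have hX : epsK K η = 3 / aK K η ^ 4 := by
    simp only [epsK, hd]
    field_simp
    linear_combination hpy
  rw [hX, hd]
  field_simp

/-- Sachs–Wolfe acoustic theorem, spatially homogeneous reduction: if `λ, μ`
solve the `k = 0` Lifshitz–Khalatnikov equations (Laplacian replaced by `0`,
sound speed `c² = 1/3`), then the transformed density contrast `Ψ = T δ`
satisfies `Ψ'' = 0`. -/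
theorem stmt9 (K : ℝ) (hK : K ∈ ({0, 1, -1} : Set ℝ))
    (lam mu : ℝ → ℝ) (S : Set ℝ) (hS : IsOpen S)
    (hlamC : ContDiffOn ℝ (⊤ : ℕ∞) lam S) (hmuC : ContDiffOn ℝ (⊤ : ℕ∞) mu S)
    (hreg : ∀ η ∈ S, aK K η ≠ 0 ∧ cosK K η ≠ 0 ∧ tauK K η ≠ 0)
    (hlam : ∀ η ∈ S, deriv (deriv lam) η
        = -2 * (deriv (aK K) η / aK K η) * deriv lam η)
    (hmu : ∀ η ∈ S, deriv (deriv mu) η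
        = -3 * (deriv (aK K) η / aK K η) * deriv mu η
          + (2 / 3) * (3 * K) * (lam η + mu η)) :
    ∀ η ∈ S,
      deriv (deriv (swT K (fun η' =>
        (1 / (3 * epsK K η' * aK K η' ^ 2)) *
          (3 * (deriv (aK K) η' / aK K η') * deriv mu η'
            - 3 * K * (lam η' + mu η'))))) η = 0 := by
  have hK' : K = 0 ∨ K = 1 ∨ K = -1 := by simpa using hK
  have hs : ∀ η, HasDerivAt (aK K) (cosK K η) η := by
    rcases hK' with rfl | rfl | rfl
    · intro η
      have h0 : aK 0 = fun x => x := by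
        funext x; simp only [aK]; norm_num
      have h1 : cosK 0 η = 1 := by simp only [cosK]; norm_num
      rw [h0, h1]
      exact hasDerivAt_id η
    · intro η
      have h0 : aK 1 = Real.sin := by funext x; simp [aK]
      have h1 : cosK 1 η = Real.cos η := by simp [cosK]
      rw [h0, h1]
      exact Real.hasDerivAt_sin η
    · intro η
      have h0 : aK (-1) = Real.sinh := by
        funext x; simp only [aK]; norm_num
      have h1 : cosK (-1) η = Real.cosh η := by
        simp only [cosK]; norm_num
      rw [h0, h1]
      exact Real.hasDerivAt_sinh η
  have hc : ∀ η, HasDerivAt (cosK K) (-(K * aK K η)) η := by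
    rcases hK' with rfl | rfl | rfl
    · intro η
      have h1 : cosK 0 = fun _ => (1:ℝ) := by
        funext x; simp only [cosK]; norm_num
      rw [h1]
      simpa using hasDerivAt_const η (1:ℝ)
    · intro η
      have h1 : cosK 1 = Real.cos := by funext x; simp [cosK]
      have h0 : aK 1 η = Real.sin η := by simp [aK]
      rw [h1, h0]
      simpa using Real.hasDerivAt_cos η
    · intro η
      have h1 : cosK (-1) = Real.cosh := by
        funext x; simp only [cosK]; norm_num
      have h0 : aK (-1) η = Real.sinh η := by
        simp only [aK]; norm_num
      rw [h1, h0]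
      simpa using Real.hasDerivAt_cosh η
  have pyth : ∀ η, cosK K η ^ 2 + K * aK K η ^ 2 = 1 := by
    rcases hK' with rfl | rfl | rfl
    · intro η
      have h1 : cosK 0 η = 1 := by simp only [cosK]; norm_num
      rw [h1]; ring
    · intro η
      have h1 : cosK 1 η = Real.cos η := by simp [cosK]
      have h0 : aK 1 η = Real.sin η := by simp [aK]
      rw [h1, h0]
      simpa using Real.cos_sq_add_sin_sq η
    · intro η
      have h1 : cosK (-1) η = Real.cosh η := by
        simp only [cosK]; norm_num
      have h0 : aK (-1) η = Real.sinh η := by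
        simp only [aK]; norm_num
      rw [h1, h0]
      have := Real.cosh_sq_sub_sinh_sq η
      linarith
  have hda : deriv (aK K) = cosK K := funext fun η => (hs η).deriv
  have ht : ∀ η ∈ S, tauK K η * cosK K η ^ 2 = aK K η ^ 2 := by
    rcases hK' with rfl | rfl | rfl
    · intro η hη
      have h1 : cosK 0 η = 1 := by simp only [cosK]; norm_num
      have h0 : aK 0 η = η := by simp only [aK]; norm_num
      have h2 : tauK 0 η = η ^ 2 := by simp only [tauK]; norm_num
      rw [h1, h0, h2]; ring
    · intro η hη
      have h1 : cosK 1 η = Real.cos η := by simp [cosK]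
      have h0 : aK 1 η = Real.sin η := by simp [aK]
      have h2 : tauK 1 η = Real.tan η ^ 2 := by simp [tauK]
      have cne : Real.cos η ≠ 0 := by
        have := (hreg η hη).2.1; rwa [h1] at this
      rw [h1, h0, h2, Real.tan_eq_sin_div_cos]
      field_simp
    · intro η hη
      have h1 : cosK (-1) η = Real.cosh η := by
        simp only [cosK]; norm_num
      have h0 : aK (-1) η = Real.sinh η := by
        simp only [aK]; norm_num
      have h2 : tauK (-1) η = Real.tanh η ^ 2 := by
        simp only [tauK]; norm_num
      rw [h1, h0, h2, Real.tanh_eq_sinh_div_cosh]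
      have cne : Real.cosh η ≠ 0 := (Real.cosh_pos η).ne'
      field_simp
  have hlam' : ∀ η ∈ S, deriv (deriv lam) η
      = -2 * (cosK K η / aK K η) * deriv lam η := by
    intro η hη; have := hlam η hη; rwa [hda] at this
  have hmu' : ∀ η ∈ S, deriv (deriv mu) η
      = -3 * (cosK K η / aK K η) * deriv mu η
        + (2/3) * (3*K) * (lam η + mu η) := by
    intro η hη; have := hmu η hη; rwa [hda] at this
  have hD : ∀ η ∈ S, (1 / (3 * epsK K η * aK K η ^ 2)) *
      (3 * (deriv (aK K) η / aK K η) * deriv mu η - 3 * K * (lam η + mu η))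
      = 1/3 * (aK K η * cosK K η * deriv mu η
        - K * aK K η ^ 2 * (lam η + mu η)) :=
    fun η hη => hD_gen K lam mu hs pyth η (hreg η hη).1
  exact key K (aK K) (cosK K) (tauK K)
    (fun η' => (1 / (3 * epsK K η' * aK K η' ^ 2)) *
      (3 * (deriv (aK K) η' / aK K η') * deriv mu η'
        - 3 * K * (lam η' + mu η')))
    lam mu S hS hs hc pyth hlamC hmuC hreg ht hlam' hmu' hD
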